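/- Let X be a finite topological space, F an abelian data on X, and G an abelian group. (1) For every closed subset Z ⊆ X there is a natural isomorphism Hom(G_Z, F) ≅ Hom(G, Γ_Z(X,F)), where Γ_Z(X,F) is the kernel of the restriction map Γ(X,F) → Γ(X∖Z, F). (2) For every open subset U ⊆ X there is a natural isomorphism Hom(F, G_U) ≅ Hom(L^U(X,F), G), where L^U(X,F) is the cokernel of the map L(X∖U, F) → L(X,F). Here the left-hand Homs are morphisms of abelian data and the right-hand Homs are group homomorphisms. -/

import Mathlib

open CategoryTheory Topology CategoryTheory.Limits

/-! Core definitions: abelian data on a finite topological space. -/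

abbrev AbData (X : Type) [TopologicalSpace X] : Type 1 := Specialization X ⥤ AddCommGrpCat.{0}
abbrev pt {X : Type} [TopologicalSpace X] (x : X) : Specialization X := Specialization.toEquiv x

section core
variable {X : Type} [TopologicalSpace X]
abbrev stalk (F : AbData X) (x : X) : Type := F.obj (pt x)

lemma naturality_apply {F G : AbData X} (φ : F ⟶ G) {p q : Specialization X} (h : p ⟶ q)
    (a : F.obj p) : G.map h (φ.app p a) = φ.app q (F.map h a) := by
  have := congrArg (fun (f : F.obj p ⟶ G.obj q) => f a) (φ.naturality h)
  simp only [CategoryTheory.comp_apply] at this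
  exact this.symm

/-- Compatible families: the sections of an abelian data over the whole space. -/
def compatSections (F : AbData X) : AddSubgroup (∀ x : X, F.obj (pt x)) where
  carrier := {u | ∀ (x y : X) (h : pt x ≤ pt y), F.map (homOfLE h) (u x) = u y}
  zero_mem' := by intro x y h; simp
  add_mem' := by intro u v hu hv x y h; simp [map_add, hu x y h, hv x y h]
  neg_mem' := by intro u hu x y h; simp [hu x y h]

/-- The sections functor `Γ(X,-)`. -/
noncomputable def secFunctor (X : Type) [TopologicalSpace X] : AbData X ⥤ AddCommGrpCat.{0} where
  obj F := AddCommGrpCat.of (compatSections F)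
  map {F G} φ := AddCommGrpCat.ofHom
    { toFun := fun u => ⟨fun x => φ.app (pt x) (u.1 x), by
        intro x y h
        rw [naturality_apply φ (homOfLE h) (u.1 x), u.2 x y h]⟩
      map_zero' := by apply Subtype.ext; funext x; simp
      map_add' := by intro u v; apply Subtype.ext; funext x; simp }
  map_id := by intro F; apply AddCommGrpCat.hom_ext; apply AddMonoidHom.ext; intro u; rfl
  map_comp := by intro F G H φ ψ; apply AddCommGrpCat.hom_ext; apply AddMonoidHom.ext; intro u; rfl

instance (X : Type) [TopologicalSpace X] : (secFunctor X).Additive where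
  map_add := by
    intro F G φ ψ
    apply AddCommGrpCat.hom_ext; apply AddMonoidHom.ext; intro u; apply Subtype.ext; funext x
    simp [secFunctor, AddMonoidHom.add_apply]
    rfl

noncomputable def cosecOf (F : AbData X) (x : X) : stalk F x →+ DirectSum X (stalk F) :=
  letI := Classical.decEq X
  DirectSum.of (stalk F) x

/-- The relations defining cosections (the colimit presentation). -/
noncomputable def cosecRel (F : AbData X) : AddSubgroup (DirectSum X (stalk F)) :=
  AddSubgroup.closure {w | ∃ (x y : X) (h : pt x ≤ pt y) (a : stalk F x),
    w = cosecOf F y (F.map (homOfLE h) a) - cosecOf F x a}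

/-- Cosections of `F` over the whole space: `L(X,F)`, presented as the quotient of the direct
sum `⊕ₓ F_x` by the relations `r_{xy}(a) - a`. -/
noncomputable def cosecGrp (F : AbData X) : AddCommGrpCat.{0} :=
  AddCommGrpCat.of (DirectSum X (stalk F) ⧸ cosecRel F)

noncomputable def cosecMk (F : AbData X) (x : X) : stalk F x →+ cosecGrp F :=
  (QuotientAddGroup.mk' (cosecRel F)).comp (cosecOf F x)

lemma cosecHom_ext {F : AbData X} {H : Type} [AddCommGroup H] {f g : cosecGrp F →+ H}
    (h : ∀ (x : X) (a : stalk F x), f (cosecMk F x a) = g (cosecMk F x a)) : f = g := by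
  letI := Classical.decEq X
  exact QuotientAddGroup.addMonoidHom_ext _ (DirectSum.addHom_ext fun x a => h x a)

noncomputable def cosecMapAux {F G : AbData X} (φ : F ⟶ G) :
    DirectSum X (stalk F) →+ cosecGrp G :=
  letI := Classical.decEq X
  DirectSum.toAddMonoid (fun x => (cosecMk G x).comp (φ.app (pt x)).hom)

lemma cosecMapAux_of {F G : AbData X} (φ : F ⟶ G) (x : X) (a : stalk F x) :
    cosecMapAux φ (cosecOf F x a) = cosecMk G x (φ.app (pt x) a) := by
  letI := Classical.decEq X
  simp [cosecMapAux, cosecOf, DirectSum.toAddMonoid_of]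

lemma cosecRel_le_ker {F G : AbData X} (φ : F ⟶ G) : cosecRel F ≤ (cosecMapAux φ).ker := by
  rw [cosecRel, AddSubgroup.closure_le]
  rintro w ⟨x, y, h, a, rfl⟩
  have : (cosecMapAux φ) (cosecOf F y ((F.map (homOfLE h)) a) - cosecOf F x a) = 0 := by
    rw [map_sub, cosecMapAux_of, cosecMapAux_of, ← naturality_apply φ (homOfLE h) a]
    show (QuotientAddGroup.mk' (cosecRel G)) (cosecOf G y (G.map (homOfLE h) (φ.app (pt x) a)))
      - (QuotientAddGroup.mk' (cosecRel G)) (cosecOf G x (φ.app (pt x) a)) = 0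
    rw [← map_sub]
    exact (QuotientAddGroup.eq_zero_iff _).mpr
      (AddSubgroup.subset_closure ⟨x, y, h, φ.app (pt x) a, rfl⟩)
  exact this

noncomputable def cosecMap {F G : AbData X} (φ : F ⟶ G) : cosecGrp F →+ cosecGrp G :=
  QuotientAddGroup.lift (cosecRel F) (cosecMapAux φ) (cosecRel_le_ker φ)

lemma cosecMap_mk {F G : AbData X} (φ : F ⟶ G) (x : X) (a : stalk F x) :
    cosecMap φ (cosecMk F x a) = cosecMk G x (φ.app (pt x) a) := cosecMapAux_of φ x a

/-- The cosections functor `L(X,-)`. -/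
noncomputable def cosecFunctor (X : Type) [TopologicalSpace X] : AbData X ⥤ AddCommGrpCat.{0} where
  obj F := cosecGrp F
  map φ := AddCommGrpCat.ofHom (cosecMap φ)
  map_id F := by
    refine AddCommGrpCat.hom_ext (cosecHom_ext fun x a => ?_)
    exact cosecMap_mk _ x a
  map_comp φ ψ := by
    refine AddCommGrpCat.hom_ext (cosecHom_ext fun x a => ?_)
    show cosecMap (φ ≫ ψ) (cosecMk _ x a) = cosecMap ψ (cosecMap φ (cosecMk _ x a))
    rw [cosecMap_mk, cosecMap_mk, cosecMap_mk]; rfl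

instance (X : Type) [TopologicalSpace X] : (cosecFunctor X).Additive where
  map_add := by
    intro F G φ ψ
    refine AddCommGrpCat.hom_ext (cosecHom_ext fun x a => ?_)
    show cosecMap (φ + ψ) (cosecMk F x a) = (cosecMap φ + cosecMap ψ) (cosecMk F x a)
    rw [AddMonoidHom.add_apply, cosecMap_mk, cosecMap_mk, cosecMap_mk]
    show cosecMk G x ((φ.app (pt x) + ψ.app (pt x)) a) = _
    rw [AddCommGrpCat.hom_add_apply, map_add]
end core

section restriction
variable {X : Type} [TopologicalSpace X]

/-- The inclusion of a subspace, as a functor between specialization preorders. -/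
def inc (S : Set X) : Specialization ↥S ⥤ Specialization X :=
  (Specialization.map ⟨(Subtype.val : S → X), continuous_subtype_val⟩).monotone.functor

/-- Restriction of abelian data to a subspace. -/
def restr (S : Set X) : AbData X ⥤ AbData ↥S := (Functor.whiskeringLeft _ _ _).obj (inc S)

lemma subtype_pt_le_iff {S : Set X} (a b : ↥S) : pt a ≤ pt b ↔ pt (a : X) ≤ pt (b : X) := by
  rw [Specialization.toEquiv_le_toEquiv, Specialization.toEquiv_le_toEquiv]
  exact (subtype_specializes_iff b a).trans Iff.rfl

lemma data_map_eq (F : AbData X) {p q : Specialization X} (h h' : p ⟶ q) : F.map h = F.map h' := by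
  congr 1
  apply Subsingleton.elim

/-- Sections of `F` over the subspace `S`: `Γ(S,F)`. -/
noncomputable def secGrpOn (S : Set X) (F : AbData X) : AddCommGrpCat.{0} :=
  (secFunctor ↥S).obj ((restr S).obj F)

/-- Cosections of `F` over the subspace `S`: `L(S,F)`. -/
noncomputable def cosecGrpOn (S : Set X) (F : AbData X) : AddCommGrpCat.{0} :=
  (cosecFunctor ↥S).obj ((restr S).obj F)

/-- Restriction of sections along an inclusion of subspaces `T ⊆ S`. -/
noncomputable def secResOn (F : AbData X) {S T : Set X} (hTS : T ⊆ S) :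
    secGrpOn S F →+ secGrpOn T F where
  toFun u := (⟨fun x => u.1 ⟨x.1, hTS x.2⟩, by
    intro x y h
    have hS : pt (⟨x.1, hTS x.2⟩ : ↥S) ≤ pt (⟨y.1, hTS y.2⟩ : ↥S) := by
      rw [subtype_pt_le_iff]
      exact (subtype_pt_le_iff x y).mp h
    have hu := u.2 ⟨x.1, hTS x.2⟩ ⟨y.1, hTS y.2⟩ hS
    have heq : ((restr T).obj F).map (homOfLE h) = ((restr S).obj F).map (homOfLE hS) :=
      data_map_eq F _ _
    rw [heq]
    exact hu⟩ : compatSections ((restr T).obj F))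
  map_zero' := rfl
  map_add' u v := rfl

noncomputable def cosecExtAux (F : AbData X) {S T : Set X} (hST : S ⊆ T) :
    DirectSum ↥S (stalk ((restr S).obj F)) →+ cosecGrp ((restr T).obj F) :=
  letI := Classical.decEq ↥S
  DirectSum.toAddMonoid (fun x => cosecMk ((restr T).obj F) ⟨x.1, hST x.2⟩)

lemma cosecExtAux_of (F : AbData X) {S T : Set X} (hST : S ⊆ T) (x : ↥S)
    (a : stalk ((restr S).obj F) x) :
    cosecExtAux F hST (cosecOf ((restr S).obj F) x a)
      = cosecMk ((restr T).obj F) ⟨x.1, hST x.2⟩ a := by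
  letI := Classical.decEq ↥S
  simp only [cosecExtAux, cosecOf, DirectSum.toAddMonoid_of]
  exact DirectSum.toAddMonoid_of _ _ _

/-- Extension of cosections along an inclusion of subspaces `S ⊆ T`. -/
noncomputable def cosecExtOn (F : AbData X) {S T : Set X} (hST : S ⊆ T) :
    cosecGrp ((restr S).obj F) →+ cosecGrp ((restr T).obj F) := by
  refine QuotientAddGroup.lift _ (cosecExtAux F hST) ?_
  rw [cosecRel, AddSubgroup.closure_le]
  rintro w ⟨x, y, h, a, rfl⟩
  have hT : pt (⟨x.1, hST x.2⟩ : ↥T) ≤ pt (⟨y.1, hST y.2⟩ : ↥T) := by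
    rw [subtype_pt_le_iff]; exact (subtype_pt_le_iff x y).mp h
  have heq : ((restr S).obj F).map (homOfLE h) = ((restr T).obj F).map (homOfLE hT) :=
    data_map_eq F _ _
  rw [SetLike.mem_coe, AddMonoidHom.mem_ker, map_sub, heq, cosecExtAux_of, cosecExtAux_of]
  show (QuotientAddGroup.mk' _) _ - (QuotientAddGroup.mk' _) _ = 0
  refine (map_sub (QuotientAddGroup.mk' (cosecRel ((restr T).obj F))) _ _).symm.trans ?_
  exact (QuotientAddGroup.eq_zero_iff _).mpr
    (AddSubgroup.subset_closure ⟨⟨x.1, hST x.2⟩, ⟨y.1, hST y.2⟩, hT, a, rfl⟩)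

lemma cosecExtOn_mk (F : AbData X) {S T : Set X} (hST : S ⊆ T) (x : ↥S)
    (a : stalk ((restr S).obj F) x) :
    cosecExtOn F hST (cosecMk ((restr S).obj F) x a)
      = cosecMk ((restr T).obj F) ⟨x.1, hST x.2⟩ a := cosecExtAux_of F hST x a

end restriction

section spaces
variable {X : Type} [TopologicalSpace X]

/-- The minimal open subset containing a point (of a finite space). -/
def minOpen (x : X) : Set X := ⋂₀ {U : Set X | IsOpen U ∧ x ∈ U}

lemma isOpen_minOpen [Finite X] (x : X) : IsOpen (minOpen x) :=
  Set.Finite.isOpen_sInter (Set.toFinite _) (fun _ hU => hU.1)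

lemma mem_minOpen_self (x : X) : x ∈ minOpen x := fun _ hU => hU.2

lemma mem_minOpen_iff {x z : X} : z ∈ minOpen x ↔ pt x ≤ pt z := by
  rw [Specialization.toEquiv_le_toEquiv, specializes_iff_forall_open]
  constructor
  · intro hz s hs hx
    exact hz s ⟨hs, hx⟩
  · intro h U hU
    exact h U hU.1 hU.2

lemma mem_closure_iff_pt_le {x z : X} : z ∈ closure ({x} : Set X) ↔ pt z ≤ pt x := by
  rw [Specialization.toEquiv_le_toEquiv, specializes_iff_mem_closure]

lemma minOpen_anti {y y' : X} (h : pt y ≤ pt y') : minOpen y' ⊆ minOpen y := by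
  intro z hz
  rw [mem_minOpen_iff] at hz ⊢
  exact le_trans h hz

lemma closure_singleton_mono {y y' : X} (h : pt y ≤ pt y') :
    closure ({y} : Set X) ⊆ closure ({y'} : Set X) := by
  intro z hz
  rw [mem_closure_iff_pt_le] at hz ⊢
  exact le_trans hz h
end spaces

section directimages
variable {X Y : Type} [TopologicalSpace X] [TopologicalSpace Y]

/-- Restriction of global sections to sections over a subspace. -/
noncomputable def secResToSub (F : AbData X) (S : Set X) :
    (secFunctor X).obj F →+ secGrpOn S F where
  toFun u := (⟨fun x => u.1 x.1, by
    intro x y h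
    have hX : pt (x : X) ≤ pt (y : X) := (subtype_pt_le_iff x y).mp h
    have hu := u.2 x.1 y.1 hX
    have heq : ((restr S).obj F).map (homOfLE h) = F.map (homOfLE hX) := data_map_eq F _ _
    rw [heq]
    exact hu⟩ : compatSections ((restr S).obj F))
  map_zero' := rfl
  map_add' u v := rfl

noncomputable def cosecFromSubAux (F : AbData X) (S : Set X) :
    DirectSum ↥S (stalk ((restr S).obj F)) →+ cosecGrp F :=
  letI := Classical.decEq ↥S
  DirectSum.toAddMonoid (fun x => cosecMk F x.1)

lemma cosecFromSubAux_of (F : AbData X) (S : Set X) (x : ↥S)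
    (a : stalk ((restr S).obj F) x) :
    cosecFromSubAux F S (cosecOf ((restr S).obj F) x a) = cosecMk F x.1 a := by
  letI := Classical.decEq ↥S
  simp only [cosecFromSubAux, cosecOf, DirectSum.toAddMonoid_of]
  exact DirectSum.toAddMonoid_of _ _ _

/-- Extension of cosections over a subspace to global cosections. -/
noncomputable def cosecExtFromSub (F : AbData X) (S : Set X) :
    cosecGrp ((restr S).obj F) →+ cosecGrp F := by
  refine QuotientAddGroup.lift _ (cosecFromSubAux F S) ?_
  rw [cosecRel, AddSubgroup.closure_le]
  rintro w ⟨x, y, h, a, rfl⟩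
  have hX : pt (x : X) ≤ pt (y : X) := (subtype_pt_le_iff x y).mp h
  have heq : ((restr S).obj F).map (homOfLE h) = F.map (homOfLE hX) := data_map_eq F _ _
  rw [SetLike.mem_coe, AddMonoidHom.mem_ker, map_sub, heq, cosecFromSubAux_of,
    cosecFromSubAux_of]
  show (QuotientAddGroup.mk' _) _ - (QuotientAddGroup.mk' _) _ = 0
  refine (map_sub (QuotientAddGroup.mk' (cosecRel F)) _ _).symm.trans ?_
  exact (QuotientAddGroup.eq_zero_iff _).mpr
    (AddSubgroup.subset_closure ⟨x.1, y.1, hX, a, rfl⟩)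

lemma cosecExtFromSub_mk (F : AbData X) (S : Set X) (x : ↥S)
    (a : stalk ((restr S).obj F) x) :
    cosecExtFromSub F S (cosecMk ((restr S).obj F) x a) = cosecMk F x.1 a :=
  cosecFromSubAux_of F S x a

/-- An abelian data is flasque if all restrictions to open subsets are surjective. -/
def Flasque (F : AbData X) : Prop :=
  ∀ U : Set X, IsOpen U → Function.Surjective (secResToSub F U)

/-- An abelian data is coflasque if all extensions from closed subsets are injective. -/
def Coflasque (F : AbData X) : Prop :=
  ∀ C : Set X, IsClosed C → Function.Injective (cosecExtFromSub F C)

/-- The inverse image functor `f⁻¹`. -/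
def invIm (f : C(X, Y)) : AbData Y ⥤ AbData X :=
  (Functor.whiskeringLeft _ _ _).obj (Specialization.map f).monotone.functor

/-- The direct image functor `f_*`, defined stalkwise by `(f_* F)_y = Γ(f⁻¹(U_y), F)`. -/
noncomputable def pushforward (f : C(X, Y)) : AbData X ⥤ AbData Y where
  obj F :=
    { obj := fun y => secGrpOn (f ⁻¹' minOpen (Specialization.ofEquiv y)) F
      map := fun {y y'} h => AddCommGrpCat.ofHom <| secResOn F (Set.preimage_mono (minOpen_anti (X := Y) (leOfHom h)))
      map_id := fun y => by apply AddCommGrpCat.hom_ext; apply AddMonoidHom.ext; intro u; apply Subtype.ext; rfl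
      map_comp := fun h1 h2 => by apply AddCommGrpCat.hom_ext; apply AddMonoidHom.ext; intro u; apply Subtype.ext; rfl }
  map {F G} φ :=
    { app := fun y => (secFunctor _).map ((restr _).map φ)
      naturality := fun y y' h => by apply AddCommGrpCat.hom_ext; apply AddMonoidHom.ext; intro u; apply Subtype.ext; rfl }
  map_id F := by
    apply NatTrans.ext; funext y; apply AddCommGrpCat.hom_ext; apply AddMonoidHom.ext; intro u; apply Subtype.ext; rfl
  map_comp φ ψ := by
    apply NatTrans.ext; funext y; apply AddCommGrpCat.hom_ext; apply AddMonoidHom.ext; intro u; apply Subtype.ext; rfl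

lemma cosecExtOn_refl (F : AbData X) {S : Set X} (h : S ⊆ S) :
    cosecExtOn F h = AddMonoidHom.id (cosecGrp ((restr S).obj F)) := by
  refine cosecHom_ext fun x a => ?_
  rw [cosecExtOn_mk]
  rfl

lemma cosecExtOn_trans (F : AbData X) {S T V : Set X} (h1 : S ⊆ T) (h2 : T ⊆ V)
    (h3 : S ⊆ V) :
    cosecExtOn F h3 = (cosecExtOn F h2).comp (cosecExtOn F h1) := by
  refine cosecHom_ext fun x a => ?_
  exact (cosecExtOn_mk F h3 x a).trans ((cosecExtOn_mk F h2 ⟨x.1, h1 x.2⟩ a).symm.trans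
    (congrArg (cosecExtOn F h2) (cosecExtOn_mk F h1 x a).symm))

lemma cosecExtOn_natural {F G : AbData X} (φ : F ⟶ G) {S T : Set X} (h : S ⊆ T) :
    (cosecMap ((restr T).map φ)).comp (cosecExtOn F h)
      = (cosecExtOn G h).comp (cosecMap ((restr S).map φ)) := by
  refine cosecHom_ext fun x a => ?_
  rw [AddMonoidHom.comp_apply, AddMonoidHom.comp_apply]
  exact ((congrArg (cosecMap ((restr T).map φ)) (cosecExtOn_mk F h x a)).trans
    (cosecMap_mk ((restr T).map φ) ⟨x.1, h x.2⟩ a)).trans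
    ((congrArg (cosecExtOn G h) (cosecMap_mk ((restr S).map φ) x a)).trans
    (cosecExtOn_mk G h x _)).symm

/-- The stalk of `f_! F`: cosections over `f⁻¹(C_y)`. -/
noncomputable def shriekObj (f : C(X, Y)) (F : AbData X) : AbData Y where
  obj y := cosecGrpOn (f ⁻¹' closure {Specialization.ofEquiv y}) F
  map {y y'} h := AddCommGrpCat.ofHom <| cosecExtOn F (Set.preimage_mono (closure_singleton_mono (X := Y) (leOfHom h)))
  map_id y := AddCommGrpCat.hom_ext (cosecExtOn_refl F _)
  map_comp {y₁ y₂ y₃} h1 h2 := AddCommGrpCat.hom_ext (cosecExtOn_trans F _ _ _)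

/-- The codirect image functor `f_!`, defined stalkwise by `(f_! F)_y = L(f⁻¹(C_y), F)`. -/
noncomputable def shriek (f : C(X, Y)) : AbData X ⥤ AbData Y where
  obj F := shriekObj f F
  map {F G} φ :=
    { app := fun y => (cosecFunctor _).map ((restr _).map φ)
      naturality := fun y y' h => AddCommGrpCat.hom_ext (cosecExtOn_natural φ _) }
  map_id F := by
    refine NatTrans.ext (funext fun y => ?_)
    show (cosecFunctor _).map ((restr _).map (𝟙 F)) = _
    rw [CategoryTheory.Functor.map_id, CategoryTheory.Functor.map_id]
    rfl
  map_comp φ ψ := by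
    refine NatTrans.ext (funext fun y => ?_)
    show (cosecFunctor _).map ((restr _).map (φ ≫ ψ)) = _
    rw [CategoryTheory.Functor.map_comp, CategoryTheory.Functor.map_comp]
    rfl
end directimages

instance pushforwardAdditive {X Y : Type} [TopologicalSpace X] [TopologicalSpace Y]
    (f : C(X, Y)) : (pushforward f).Additive where
  map_add := by
    intro F G φ ψ
    refine NatTrans.ext (funext fun y => ?_)
    apply AddCommGrpCat.hom_ext; apply AddMonoidHom.ext; intro u; apply Subtype.ext; funext x
    rfl

instance shriekAdditive {X Y : Type} [TopologicalSpace X] [TopologicalSpace Y]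
    (f : C(X, Y)) : (shriek f).Additive where
  map_add := by
    intro F G φ ψ
    refine NatTrans.ext (funext fun y => ?_)
    refine AddCommGrpCat.hom_ext (cosecHom_ext fun x a => ?_)
    show cosecMap ((restr _).map (φ + ψ)) (cosecMk _ x a)
      = cosecMap ((restr _).map φ) (cosecMk _ x a) + cosecMap ((restr _).map ψ) (cosecMk _ x a)
    rw [cosecMap_mk, cosecMap_mk, cosecMap_mk]
    exact map_add _ _ _


section supp
open CategoryTheory
variable {X : Type} [TopologicalSpace X]

lemma mem_of_isLocallyClosed {S : Set X} (hS : IsLocallyClosed S) {p q r : X}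
    (h1 : q ⤳ p) (h2 : r ⤳ q) (hp : p ∈ S) (hr : r ∈ S) : q ∈ S := by
  obtain ⟨U, Z, hU, hZ, rfl⟩ := hS
  exact ⟨h1.mem_open hU hp.1, h2.mem_closed hZ hr.2⟩

open Classical in
/-- The abelian data `G_S` supported on a locally closed subset `S`: the stalk at `p` is `G`
if `p ∈ S` and `0` otherwise; the transition maps are the identity between points of `S` and
zero otherwise. -/
noncomputable def suppData (G : AddCommGrpCat.{0}) (S : Set X) (hS : IsLocallyClosed S) :
    AbData X where
  obj p := if (Specialization.ofEquiv p : X) ∈ S then G else AddCommGrpCat.of PUnit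
  map {p q} h :=
    if hp : (Specialization.ofEquiv p : X) ∈ S then
      if hq : (Specialization.ofEquiv q : X) ∈ S then
        eqToHom (if_pos hp) ≫ eqToHom (if_pos hq).symm
      else 0
    else 0
  map_id p := by
    by_cases hp : (Specialization.ofEquiv p : X) ∈ S
    · simp [hp]
    · have hsub : Subsingleton
          ((if (Specialization.ofEquiv p : X) ∈ S then G else AddCommGrpCat.of PUnit) : AddCommGrpCat) := by
        rw [if_neg hp]
        exact inferInstanceAs (Subsingleton PUnit)
      simp only [dif_neg hp]
      exact AddCommGrpCat.hom_ext (AddMonoidHom.ext fun a => Subsingleton.elim _ _)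
  map_comp {p q r} h1 h2 := by
    have hmid : (Specialization.ofEquiv p : X) ∈ S → (Specialization.ofEquiv r : X) ∈ S →
        (Specialization.ofEquiv q : X) ∈ S := fun hp hr =>
      mem_of_isLocallyClosed hS (Specialization.ofEquiv_specializes_ofEquiv.mpr (leOfHom h1))
        (Specialization.ofEquiv_specializes_ofEquiv.mpr (leOfHom h2)) hp hr
    by_cases hp : (Specialization.ofEquiv p : X) ∈ S
    · by_cases hr : (Specialization.ofEquiv r : X) ∈ S
      · have hq := hmid hp hr
        simp [hp, hq, hr]
      · by_cases hq : (Specialization.ofEquiv q : X) ∈ S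
        · simp [hp, hq, hr]
        · simp [hp, hq, hr]
    · simp [hp]

/-- The map induced by `φ : F ⟶ F'` on sections over a subspace. -/
noncomputable def secMapOn (U : Set X) {F F' : AbData X} (φ : F ⟶ F') :
    secGrpOn U F →+ secGrpOn U F' :=
  ((secFunctor ↥U).map ((restr U).map φ)).hom

/-- The map induced by `φ : F ⟶ F'` on cosections over a subspace. -/
noncomputable def cosecMapOn (S : Set X) {F F' : AbData X} (φ : F ⟶ F') :
    cosecGrpOn S F →+ cosecGrpOn S F' :=
  cosecMap ((restr S).map φ)
end supp


section supp16
open CategoryTheory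
variable {X : Type} [TopologicalSpace X]

/-- `Γ(X,−)` applied to a morphism, as a homomorphism. -/
noncomputable def secMapA {F F' : AbData X} (φ : F ⟶ F') :
    (secFunctor X).obj F →+ (secFunctor X).obj F' :=
  ((secFunctor X).map φ).hom

/-- `Γ_Z(X,F)`: the kernel of the restriction `Γ(X,F) → Γ(X∖Z,F)`. -/
noncomputable def gammaSupp (Z : Set X) (F : AbData X) :
    AddSubgroup ((secFunctor X).obj F) :=
  (secResToSub F Zᶜ).ker

/-- The map induced by `φ : F ⟶ F'` on `Γ_Z(X,−)`. -/
noncomputable def gammaSuppMap (Z : Set X) {F F' : AbData X} (φ : F ⟶ F') :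
    gammaSupp Z F →+ gammaSupp Z F' :=
  AddMonoidHom.codRestrict ((secMapA φ).comp (AddSubgroup.subtype _)) _ (by
    rintro ⟨u, hu⟩
    have hu' : ∀ x : ↥(Zᶜ), u.1 x.1 = 0 := by
      intro x
      have := congrArg Subtype.val hu
      exact congrFun this x
    apply Subtype.ext
    funext x
    show φ.app (pt x.1) (u.1 x.1) = 0
    rw [hu' x, map_zero])

/-- `L^U(X,F)`: the cokernel of `L(X∖U,F) → L(X,F)`. -/
noncomputable def coLsupp (U : Set X) (F : AbData X) : Type :=
  cosecGrp F ⧸ (cosecExtFromSub F Uᶜ).range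

noncomputable instance (U : Set X) (F : AbData X) : AddCommGroup (coLsupp U F) :=
  inferInstanceAs (AddCommGroup (cosecGrp F ⧸ (cosecExtFromSub F Uᶜ).range))

lemma cosecExtFromSub_natural {F F' : AbData X} (φ : F ⟶ F') (S : Set X) :
    (cosecMap φ).comp (cosecExtFromSub F S)
      = (cosecExtFromSub F' S).comp (cosecMap ((restr S).map φ)) := by
  refine cosecHom_ext fun x a => ?_
  rw [AddMonoidHom.comp_apply, AddMonoidHom.comp_apply]
  exact ((congrArg (cosecMap φ) (cosecExtFromSub_mk F S x a)).trans (cosecMap_mk φ x.1 a)).trans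
    ((congrArg (cosecExtFromSub F' S) (cosecMap_mk ((restr S).map φ) x a)).trans
    (cosecExtFromSub_mk F' S x _)).symm

/-- The map induced by `φ : F ⟶ F'` on `L^U(X,−)`. -/
noncomputable def coLsuppMap (U : Set X) {F F' : AbData X} (φ : F ⟶ F') :
    coLsupp U F →+ coLsupp U F' :=
  QuotientAddGroup.map _ _ (cosecMap φ) (by
    rintro w ⟨v, rfl⟩
    refine ⟨cosecMap ((restr Uᶜ).map φ) v, ?_⟩
    have := congrArg (fun (f : cosecGrpOn Uᶜ F →+ cosecGrp F') => f v)
      (cosecExtFromSub_natural φ Uᶜ)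
    exact this.symm)
end supp16


section proofaux
open CategoryTheory
variable {X : Type} [TopologicalSpace X]

lemma gcomp_apply {A B C : AddCommGrpCat.{0}} (f : A ⟶ B) (g : B ⟶ C) (a : A) :
    (f ≫ g) a = g (f a) := rfl

lemma gzero_apply {A B : AddCommGrpCat.{0}} (a : A) : (0 : A ⟶ B) a = 0 := rfl

lemma eqToHom_cancel' {A B : AddCommGrpCat.{0}} (e : A = B) (e' : B = A) (a : A) :
    (eqToHom e') ((eqToHom e) a) = a := by
  have h : eqToHom e ≫ eqToHom e' = 𝟙 A := by rw [eqToHom_trans, eqToHom_refl]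
  exact congrArg (fun f : A ⟶ A => f a) h

lemma suppData_obj_eq (G : AddCommGrpCat.{0}) {S : Set X} (hS : IsLocallyClosed S)
    {p : Specialization X} (hp : (Specialization.ofEquiv p : X) ∈ S) :
    (suppData G S hS).obj p = G := if_pos hp

lemma suppData_subsingleton (G : AddCommGrpCat.{0}) {S : Set X} (hS : IsLocallyClosed S)
    {p : Specialization X} (hp : (Specialization.ofEquiv p : X) ∉ S) :
    Subsingleton ((suppData G S hS).obj p) := by
  have e : (suppData G S hS).obj p = AddCommGrpCat.of PUnit := if_neg hp
  rw [e]
  exact inferInstanceAs (Subsingleton PUnit)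

open Classical in
lemma suppData_map_pos (G : AddCommGrpCat.{0}) {S : Set X} (hS : IsLocallyClosed S)
    {p q : Specialization X} (h : p ⟶ q) (hp : (Specialization.ofEquiv p : X) ∈ S)
    (hq : (Specialization.ofEquiv q : X) ∈ S) :
    (suppData G S hS).map h
      = eqToHom (suppData_obj_eq G hS hp) ≫ eqToHom (suppData_obj_eq G hS hq).symm := by
  show (if hp' : (Specialization.ofEquiv p : X) ∈ S then
      if hq' : (Specialization.ofEquiv q : X) ∈ S then
        eqToHom (if_pos hp') ≫ eqToHom (if_pos hq').symm else 0 else 0) = _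
  rw [dif_pos hp, dif_pos hq]
  rfl

open Classical in
lemma suppData_map_negl (G : AddCommGrpCat.{0}) {S : Set X} (hS : IsLocallyClosed S)
    {p q : Specialization X} (h : p ⟶ q) (hp : (Specialization.ofEquiv p : X) ∉ S) :
    (suppData G S hS).map h = 0 := by
  show (if hp' : (Specialization.ofEquiv p : X) ∈ S then
      if hq' : (Specialization.ofEquiv q : X) ∈ S then
        eqToHom (if_pos hp') ≫ eqToHom (if_pos hq').symm else 0 else 0) = _
  rw [dif_neg hp]
  rfl

open Classical in
lemma suppData_map_negr (G : AddCommGrpCat.{0}) {S : Set X} (hS : IsLocallyClosed S)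
    {p q : Specialization X} (h : p ⟶ q) (hq : (Specialization.ofEquiv q : X) ∉ S) :
    (suppData G S hS).map h = 0 := by
  show (if hp' : (Specialization.ofEquiv p : X) ∈ S then
      if hq' : (Specialization.ofEquiv q : X) ∈ S then
        eqToHom (if_pos hp') ≫ eqToHom (if_pos hq').symm else 0 else 0) = _
  by_cases hp : (Specialization.ofEquiv p : X) ∈ S
  · rw [dif_pos hp, dif_neg hq]
    rfl
  · rw [dif_neg hp]
    rfl

end proofaux


section part1
open CategoryTheory
variable {X : Type} [TopologicalSpace X] (G : AddCommGrpCat.{0}) {Z : Set X} (hZ : IsClosed Z)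

open Classical in
/-- The section of `F` associated to `ψ : G_Z ⟶ F` and `g : G`. -/
noncomputable def fwdSec (F : AbData X) (ψ : suppData G Z hZ.isLocallyClosed ⟶ F) (g : G)
    (x : X) : F.obj (pt x) :=
  if hx : x ∈ Z then
    ψ.app (pt x) ((eqToHom (suppData_obj_eq G hZ.isLocallyClosed (p := pt x) hx).symm) g) else 0

lemma pt_le_mem_closed {Z' : Set X} (hZ' : IsClosed Z') {x y : X} (h : pt x ≤ pt y)
    (hy : y ∈ Z') : x ∈ Z' :=
  (Specialization.toEquiv_le_toEquiv.mp h).mem_closed hZ' hy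

lemma fwdSec_compat (F : AbData X) (ψ : suppData G Z hZ.isLocallyClosed ⟶ F) (g : G) :
    fwdSec G hZ F ψ g ∈ compatSections F := by
  intro x y h
  by_cases hy : y ∈ Z
  · have hx : x ∈ Z := pt_le_mem_closed hZ h hy
    rw [fwdSec, fwdSec, dif_pos hx, dif_pos hy,
      naturality_apply ψ (homOfLE h),
      suppData_map_pos G hZ.isLocallyClosed (homOfLE h) hx hy,
      gcomp_apply]
    exact congrArg (fun t => ψ.app (pt y)
      ((eqToHom (suppData_obj_eq G hZ.isLocallyClosed hy).symm) t))
      (eqToHom_cancel' (suppData_obj_eq G hZ.isLocallyClosed hx).symm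
        (suppData_obj_eq G hZ.isLocallyClosed hx) g)
  · rw [fwdSec, fwdSec, dif_neg hy]
    by_cases hx : x ∈ Z
    · rw [dif_pos hx, naturality_apply ψ (homOfLE h),
        suppData_map_negr G hZ.isLocallyClosed (homOfLE h) hy]
      simp
    · rw [dif_neg hx, map_zero]

lemma fwdSec_mem (F : AbData X) (ψ : suppData G Z hZ.isLocallyClosed ⟶ F) (g : G) :
    (⟨fwdSec G hZ F ψ g, fwdSec_compat G hZ F ψ g⟩ : compatSections F) ∈ gammaSupp Z F := by
  show secResToSub F Zᶜ _ = 0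
  apply Subtype.ext
  funext x
  show fwdSec G hZ F ψ g x.1 = 0
  rw [fwdSec, dif_neg x.2]

/-- Forward map of part (1). -/
noncomputable def fwd1 (F : AbData X) (ψ : suppData G Z hZ.isLocallyClosed ⟶ F) :
    G →+ gammaSupp Z F where
  toFun g := ⟨⟨fwdSec G hZ F ψ g, fwdSec_compat G hZ F ψ g⟩, fwdSec_mem G hZ F ψ g⟩
  map_zero' := by
    apply Subtype.ext; apply Subtype.ext; funext x
    show fwdSec G hZ F ψ 0 x = 0
    rw [fwdSec]
    by_cases hx : x ∈ Z
    · rw [dif_pos hx, map_zero, map_zero]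
    · rw [dif_neg hx]
  map_add' g g' := by
    apply Subtype.ext; apply Subtype.ext; funext x
    show fwdSec G hZ F ψ (g + g') x = fwdSec G hZ F ψ g x + fwdSec G hZ F ψ g' x
    rw [fwdSec, fwdSec, fwdSec]
    by_cases hx : x ∈ Z
    · rw [dif_pos hx, dif_pos hx, dif_pos hx, map_add, map_add]
    · rw [dif_neg hx, dif_neg hx, dif_neg hx, add_zero]

/-- Evaluation of a `Γ_Z`-valued map at a point, as a homomorphism. -/
noncomputable def evalHom (F : AbData X) (f : G →+ gammaSupp Z F) (p : Specialization X) :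
    G →+ F.obj p where
  toFun g := (f g).1.1 (Specialization.ofEquiv p)
  map_zero' := by simp only [map_zero]; rfl
  map_add' g g' := by simp only [map_add]; rfl

lemma evalHom_apply (F : AbData X) (f : G →+ gammaSupp Z F) (p : Specialization X) (g : G) :
    evalHom G F f p g = (f g).1.1 (Specialization.ofEquiv p) := rfl

lemma gammaSupp_val_eq_zero (F : AbData X) (u : gammaSupp Z F) {x : X} (hx : x ∉ Z) :
    u.1.1 x = 0 := by
  have h := u.2
  have h2 := congrArg Subtype.val h
  exact congrFun h2 (⟨x, hx⟩ : ↥(Zᶜ : Set X))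

open Classical in
/-- Backward map of part (1). -/
noncomputable def bwd1 (F : AbData X) (f : G →+ gammaSupp Z F) :
    suppData G Z hZ.isLocallyClosed ⟶ F where
  app p :=
    if hp : (Specialization.ofEquiv p : X) ∈ Z then
      AddCommGrpCat.ofHom (X := (suppData G Z hZ.isLocallyClosed).obj p) (Y := F.obj p) ((evalHom G F f p).comp (eqToHom (suppData_obj_eq G hZ.isLocallyClosed hp)).hom)
    else 0
  naturality {p q} h := by
    apply AddCommGrpCat.ext; intro a
    rw [gcomp_apply, gcomp_apply]
    dsimp only
    by_cases hq : (Specialization.ofEquiv q : X) ∈ Z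
    · have hp : (Specialization.ofEquiv p : X) ∈ Z := pt_le_mem_closed hZ (leOfHom h) hq
      rw [dif_pos hp, dif_pos hq, suppData_map_pos G hZ.isLocallyClosed h hp hq,
        gcomp_apply, AddCommGrpCat.ofHom_apply, AddCommGrpCat.ofHom_apply,
        AddMonoidHom.comp_apply, AddMonoidHom.comp_apply,
        data_map_eq F h (homOfLE (leOfHom h))]
      refine Eq.trans (congrArg (evalHom G F f q)
        (eqToHom_cancel' (suppData_obj_eq G hZ.isLocallyClosed hq).symm
          (suppData_obj_eq G hZ.isLocallyClosed hq)
          ((eqToHom (suppData_obj_eq G hZ.isLocallyClosed hp)) a))) ?_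
      exact ((f ((eqToHom (suppData_obj_eq G hZ.isLocallyClosed hp)) a)).1.2
        (Specialization.ofEquiv p) (Specialization.ofEquiv q) (leOfHom h)).symm
    · rw [dif_neg hq, suppData_map_negr G hZ.isLocallyClosed h hq,
        gzero_apply]
      by_cases hp : (Specialization.ofEquiv p : X) ∈ Z
      · rw [dif_pos hp, data_map_eq F h (homOfLE (leOfHom h))]
        refine Eq.symm (Eq.trans ((f ((eqToHom (suppData_obj_eq G hZ.isLocallyClosed hp)) a)).1.2
          (Specialization.ofEquiv p) (Specialization.ofEquiv q) (leOfHom h)) ?_)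
        exact gammaSupp_val_eq_zero F _ hq
      · rw [dif_neg hp, gzero_apply, map_zero]

/-- The equivalence of part (1). -/
noncomputable def equiv1 (F : AbData X) :
    (suppData G Z hZ.isLocallyClosed ⟶ F) ≃ (G →+ gammaSupp Z F) where
  toFun := fwd1 G hZ F
  invFun := bwd1 G hZ F
  left_inv ψ := by
    apply NatTrans.ext; funext p; apply AddCommGrpCat.ext; intro a
    show (bwd1 G hZ F (fwd1 G hZ F ψ)).app p a = ψ.app p a
    by_cases hp : (Specialization.ofEquiv p : X) ∈ Z
    · simp only [bwd1]
      rw [dif_pos hp]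
      refine Eq.trans (dif_pos hp) ?_
      exact congrArg (ψ.app p)
        (eqToHom_cancel' (suppData_obj_eq G hZ.isLocallyClosed hp)
          (suppData_obj_eq G hZ.isLocallyClosed hp).symm a)
    · simp only [bwd1]
      rw [dif_neg hp, gzero_apply]
      have : Subsingleton ((suppData G Z hZ.isLocallyClosed).obj p) :=
        suppData_subsingleton G _ hp
      rw [Subsingleton.elim a 0, map_zero]
  right_inv f := by
    apply AddMonoidHom.ext; intro g
    apply Subtype.ext; apply Subtype.ext; funext x
    show fwdSec G hZ F (bwd1 G hZ F f) g x = (f g).1.1 x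
    by_cases hx : x ∈ Z
    · refine Eq.trans (dif_pos hx) ?_
      show (bwd1 G hZ F f).app (pt x) _ = _
      simp only [bwd1]
      rw [dif_pos (show (Specialization.ofEquiv (pt x) : X) ∈ Z from hx)]
      exact congrArg (fun t => (f t).1.1 x)
        (eqToHom_cancel' (suppData_obj_eq G hZ.isLocallyClosed hx).symm
          (suppData_obj_eq G hZ.isLocallyClosed hx) g)
    · exact Eq.trans (dif_neg hx) (gammaSupp_val_eq_zero F (f g) hx).symm

lemma equiv1_natural (F F' : AbData X) (φ : F ⟶ F')
    (ψ : suppData G Z hZ.isLocallyClosed ⟶ F) :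
    equiv1 G hZ F' (ψ ≫ φ) = (gammaSuppMap Z φ).comp (equiv1 G hZ F ψ) := by
  apply AddMonoidHom.ext; intro g
  apply Subtype.ext; apply Subtype.ext; funext x
  show fwdSec G hZ F' (ψ ≫ φ) g x = φ.app (pt x) (fwdSec G hZ F ψ g x)
  by_cases hx : x ∈ Z
  · refine Eq.trans (dif_pos hx) ?_
    have hfs : fwdSec G hZ F ψ g x
        = ψ.app (pt x) ((eqToHom (suppData_obj_eq G hZ.isLocallyClosed hx).symm) g) :=
      dif_pos hx
    rw [hfs]
    rfl
  · refine Eq.trans (dif_neg hx) ?_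
    rw [show fwdSec G hZ F ψ g x = 0 from dif_neg hx, map_zero]

end part1


section part2
open CategoryTheory
variable {X : Type} [TopologicalSpace X] (G : AddCommGrpCat.{0}) {U : Set X} (hU : IsOpen U)

lemma cosecMk_rel (F : AbData X) {x y : X} (h : pt x ≤ pt y) (a : stalk F x) :
    cosecMk F y (F.map (homOfLE h) a) = cosecMk F x a := by
  show QuotientAddGroup.mk' (cosecRel F) _ = QuotientAddGroup.mk' (cosecRel F) _
  rw [← sub_eq_zero, ← map_sub]
  exact (QuotientAddGroup.eq_zero_iff _).mpr
    (AddSubgroup.subset_closure ⟨x, y, h, a, rfl⟩)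

/-- The projection onto the cokernel `L^U(X,F)`. -/
noncomputable def coMk (U : Set X) (F : AbData X) : cosecGrp F →+ coLsupp U F :=
  QuotientAddGroup.mk' _

lemma coLsupp_ext {U : Set X} {F : AbData X} {H : Type} [AddCommGroup H]
    {f g : coLsupp U F →+ H}
    (h : ∀ (x : X) (a : stalk F x),
      f (coMk U F (cosecMk F x a)) = g (coMk U F (cosecMk F x a))) : f = g :=
  QuotientAddGroup.addMonoidHom_ext _ (cosecHom_ext h)

lemma coMk_cosecMk_eq_zero {U : Set X} (F : AbData X) {x : X} (hx : x ∉ U) (a : stalk F x) :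
    coMk U F (cosecMk F x a) = 0 :=
  (QuotientAddGroup.eq_zero_iff _).mpr
    ⟨cosecMk ((restr Uᶜ).obj F) ⟨x, hx⟩ a, cosecExtFromSub_mk F Uᶜ ⟨x, hx⟩ a⟩

open Classical in
/-- Forward map of part (2), on the direct sum. -/
noncomputable def cofwdAux (F : AbData X) (ψ : F ⟶ suppData G U hU.isLocallyClosed) :
    DirectSum X (stalk F) →+ G :=
  letI := Classical.decEq X
  DirectSum.toAddMonoid (fun x =>
    if hx : x ∈ U then
      (eqToHom (suppData_obj_eq G hU.isLocallyClosed hx)).hom.comp (ψ.app (pt x)).hom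
    else 0)

open Classical in
lemma cofwdAux_of (F : AbData X) (ψ : F ⟶ suppData G U hU.isLocallyClosed) (x : X)
    (a : stalk F x) :
    cofwdAux G hU F ψ (cosecOf F x a)
      = if hx : x ∈ U then
          (eqToHom (suppData_obj_eq G hU.isLocallyClosed hx)) (ψ.app (pt x) a) else 0 := by
  letI := Classical.decEq X
  simp only [cofwdAux, cosecOf, DirectSum.toAddMonoid_of]
  by_cases hx : x ∈ U
  · rw [dif_pos hx, dif_pos hx]; rfl
  · rw [dif_neg hx, dif_neg hx]; rfl

lemma cofwdAux_rel (F : AbData X) (ψ : F ⟶ suppData G U hU.isLocallyClosed) :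
    cosecRel F ≤ (cofwdAux G hU F ψ).ker := by
  rw [cosecRel, AddSubgroup.closure_le]
  rintro w ⟨x, y, h, a, rfl⟩
  rw [SetLike.mem_coe, AddMonoidHom.mem_ker, map_sub, cofwdAux_of, cofwdAux_of,
    sub_eq_zero]
  by_cases hx : x ∈ U
  · have hy : y ∈ U := (Specialization.toEquiv_le_toEquiv.mp h).mem_open hU hx
    rw [dif_pos hx, dif_pos hy, ← naturality_apply ψ (homOfLE h) a,
      suppData_map_pos G hU.isLocallyClosed (homOfLE h) hx hy, gcomp_apply]
    exact eqToHom_cancel' (suppData_obj_eq G hU.isLocallyClosed hy).symm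
      (suppData_obj_eq G hU.isLocallyClosed hy)
      ((eqToHom (suppData_obj_eq G hU.isLocallyClosed hx)) (ψ.app (pt x) a))
  · rw [dif_neg hx]
    by_cases hy : y ∈ U
    · rw [dif_pos hy, ← naturality_apply ψ (homOfLE h) a,
        suppData_map_negl G hU.isLocallyClosed (homOfLE h) hx,
        gzero_apply]
      exact map_zero _
    · rw [dif_neg hy]

/-- Forward map of part (2), on `L(X,F)`. -/
noncomputable def cofwd1 (F : AbData X) (ψ : F ⟶ suppData G U hU.isLocallyClosed) :
    cosecGrp F →+ G :=
  QuotientAddGroup.lift _ (cofwdAux G hU F ψ) (cofwdAux_rel G hU F ψ)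

open Classical in
lemma cofwd1_mk (F : AbData X) (ψ : F ⟶ suppData G U hU.isLocallyClosed) (x : X)
    (a : stalk F x) :
    cofwd1 G hU F ψ (cosecMk F x a)
      = if hx : x ∈ U then
          (eqToHom (suppData_obj_eq G hU.isLocallyClosed hx)) (ψ.app (pt x) a) else 0 :=
  cofwdAux_of G hU F ψ x a

/-- Forward map of part (2). -/
noncomputable def cofwd (F : AbData X) (ψ : F ⟶ suppData G U hU.isLocallyClosed) :
    coLsupp U F →+ G := by
  refine QuotientAddGroup.lift _ (cofwd1 G hU F ψ) ?_
  have hzero : (cofwd1 G hU F ψ).comp (cosecExtFromSub F Uᶜ) = 0 := by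
    refine cosecHom_ext fun x a => ?_
    show cofwd1 G hU F ψ (cosecExtFromSub F Uᶜ (cosecMk _ x a)) = (0 : G)
    rw [cosecExtFromSub_mk]
    exact (cofwd1_mk G hU F ψ x.1 a).trans (dif_neg x.2)
  rintro w ⟨v, rfl⟩
  have := congrArg (fun (f : cosecGrpOn Uᶜ F →+ G) => f v) hzero
  exact this

open Classical in
lemma cofwd_mk (F : AbData X) (ψ : F ⟶ suppData G U hU.isLocallyClosed) (x : X)
    (a : stalk F x) :
    cofwd G hU F ψ (coMk U F (cosecMk F x a))
      = if hx : x ∈ U then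
          (eqToHom (suppData_obj_eq G hU.isLocallyClosed hx)) (ψ.app (pt x) a) else 0 :=
  cofwd1_mk G hU F ψ x a

open Classical in
/-- Backward map of part (2). -/
noncomputable def cobwd (F : AbData X) (f : coLsupp U F →+ G) :
    F ⟶ suppData G U hU.isLocallyClosed where
  app p :=
    if hp : (Specialization.ofEquiv p : X) ∈ U then
      AddCommGrpCat.ofHom (X := F.obj p) (Y := (suppData G U hU.isLocallyClosed).obj p) ((eqToHom (suppData_obj_eq G hU.isLocallyClosed hp).symm).hom.comp
        (f.comp ((coMk U F).comp (cosecMk F (Specialization.ofEquiv p)))))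
    else 0
  naturality {p q} h := by
    apply AddCommGrpCat.ext; intro a
    rw [gcomp_apply, gcomp_apply]
    dsimp only
    have hrel : cosecMk F (Specialization.ofEquiv q) (F.map h a)
        = cosecMk F (Specialization.ofEquiv p) a := by
      rw [data_map_eq F h (homOfLE (leOfHom h))]
      exact cosecMk_rel F (leOfHom h) a
    by_cases hq : (Specialization.ofEquiv q : X) ∈ U
    · rw [dif_pos hq]
      refine (congrArg (eqToHom (suppData_obj_eq G hU.isLocallyClosed hq).symm)
        (congrArg f (congrArg (coMk U F) hrel))).trans ?_
      by_cases hp : (Specialization.ofEquiv p : X) ∈ U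
      · rw [dif_pos hp, suppData_map_pos G hU.isLocallyClosed h hp hq, gcomp_apply]
        exact (congrArg (eqToHom (suppData_obj_eq G hU.isLocallyClosed hq).symm)
          (eqToHom_cancel' (suppData_obj_eq G hU.isLocallyClosed hp).symm
            (suppData_obj_eq G hU.isLocallyClosed hp)
            (f (coMk U F (cosecMk F (Specialization.ofEquiv p) a))))).symm
      · have h0 : coMk U F (cosecMk F (Specialization.ofEquiv p) a) = 0 :=
          coMk_cosecMk_eq_zero F hp a
        rw [dif_neg hp, gzero_apply, map_zero, h0, map_zero, map_zero]
    · rw [dif_neg hq, suppData_map_negr G hU.isLocallyClosed h hq,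
        gzero_apply, gzero_apply]

/-- The equivalence of part (2). -/
noncomputable def equiv2 (F : AbData X) :
    (F ⟶ suppData G U hU.isLocallyClosed) ≃ (coLsupp U F →+ G) where
  toFun := cofwd G hU F
  invFun := cobwd G hU F
  left_inv ψ := by
    apply NatTrans.ext; funext p; apply AddCommGrpCat.ext; intro a
    show (cobwd G hU F (cofwd G hU F ψ)).app p a = ψ.app p a
    by_cases hp : (Specialization.ofEquiv p : X) ∈ U
    · simp only [cobwd]
      rw [dif_pos hp]
      refine (congrArg (eqToHom (suppData_obj_eq G hU.isLocallyClosed hp).symm)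
        ((cofwd_mk G hU F ψ (Specialization.ofEquiv p) a).trans (dif_pos hp))).trans ?_
      exact eqToHom_cancel' (suppData_obj_eq G hU.isLocallyClosed hp)
        (suppData_obj_eq G hU.isLocallyClosed hp).symm (ψ.app p a)
    · simp only [cobwd]
      rw [dif_neg hp, gzero_apply]
      have : Subsingleton ((suppData G U hU.isLocallyClosed).obj p) :=
        suppData_subsingleton G _ hp
      exact Subsingleton.elim _ _
  right_inv f := by
    refine coLsupp_ext fun x a => ?_
    rw [cofwd_mk]
    by_cases hx : x ∈ U
    · rw [dif_pos hx]
      show (eqToHom (suppData_obj_eq G hU.isLocallyClosed hx))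
        ((cobwd G hU F f).app (pt x) a) = _
      simp only [cobwd]
      rw [dif_pos (show (Specialization.ofEquiv (pt x) : X) ∈ U from hx)]
      exact eqToHom_cancel' (suppData_obj_eq G hU.isLocallyClosed hx).symm
        (suppData_obj_eq G hU.isLocallyClosed hx)
        (f (coMk U F (cosecMk F x a)))
    · rw [dif_neg hx, coMk_cosecMk_eq_zero F hx, map_zero]

lemma equiv2_natural (F F' : AbData X) (φ : F' ⟶ F)
    (ψ : F ⟶ suppData G U hU.isLocallyClosed) :
    equiv2 G hU F' (φ ≫ ψ) = (equiv2 G hU F ψ).comp (coLsuppMap U φ) := by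
  refine coLsupp_ext fun x a => ?_
  have hmap : coLsuppMap U φ (coMk U F' (cosecMk F' x a))
      = coMk U F (cosecMap φ (cosecMk F' x a)) :=
    QuotientAddGroup.map_mk' _ _ _ _ _
  rw [AddMonoidHom.comp_apply, hmap, cosecMap_mk]
  show cofwd G hU F' (φ ≫ ψ) (coMk U F' (cosecMk F' x a))
    = cofwd G hU F ψ (coMk U F (cosecMk F x (φ.app (pt x) a)))
  rw [cofwd_mk, cofwd_mk]
  by_cases hx : x ∈ U
  · rw [dif_pos hx, dif_pos hx]; rfl
  · rw [dif_neg hx, dif_neg hx]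

end part2

/-- **Statement 16.** Let `X` be a finite space, `F` an abelian data on `X` and `G` an abelian
group. (1) For every closed `Z ⊆ X`, `Hom(G_Z, F) ≅ Hom(G, Γ_Z(X,F))` naturally in `F`, where
`Γ_Z(X,F)` is the kernel of `Γ(X,F) → Γ(X∖Z,F)`. (2) For every open `U ⊆ X`,
`Hom(F, G_U) ≅ Hom(L^U(X,F), G)` naturally in `F`, where `L^U(X,F)` is the cokernel of
`L(X∖U,F) → L(X,F)`. -/
theorem statement16 {X : Type} [TopologicalSpace X] [Finite X] (G : AddCommGrpCat.{0}) :
    (∀ (Z : Set X) (hZ : IsClosed Z),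
      ∃ e : ∀ F : AbData X, (suppData G Z hZ.isLocallyClosed ⟶ F) ≃ (G →+ gammaSupp Z F),
        ∀ (F F' : AbData X) (φ : F ⟶ F') (ψ : suppData G Z hZ.isLocallyClosed ⟶ F),
          e F' (ψ ≫ φ) = (gammaSuppMap Z φ).comp (e F ψ)) ∧
    (∀ (U : Set X) (hU : IsOpen U),
      ∃ e : ∀ F : AbData X, (F ⟶ suppData G U hU.isLocallyClosed) ≃ (coLsupp U F →+ G),
        ∀ (F F' : AbData X) (φ : F' ⟶ F) (ψ : F ⟶ suppData G U hU.isLocallyClosed),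
          e F' (φ ≫ ψ) = (e F ψ).comp (coLsuppMap U φ)) := by
  constructor
  · intro Z hZ
    exact ⟨fun F => equiv1 G hZ F, fun F F' φ ψ => equiv1_natural G hZ F F' φ ψ⟩
  · intro U hU
    exact ⟨fun F => equiv2 G hU F, fun F F' φ ψ => equiv2_natural G hU F F' φ ψ⟩
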